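/- Let T be any interval exchange transformation over the ordered alphabet A with permutation π (no regularity or minimality assumption). Then for every u ∈ L(T), every return word w to u in L(T) is π-clustering for A. -/

import Mathlib

/-- `wordPow u p` is the `p`-fold concatenation `u^p`. -/
def wordPow {A : Type*} (u : List A) : ℕ → List A
  | 0 => []
  | n + 1 => u ++ wordPow u n

/-- A word is primitive if it is not a proper integer power of another word. -/
def Primitive {A : Type*} (w : List A) : Prop :=
  ∀ (v : List A) (m : ℕ), w = wordPow v m → m = 1

/-- The Burrows–Wheeler transform of a word: the last letters of its cyclic rotations
listed in non-decreasing lexicographic order. -/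
def bwt {A : Type*} [LinearOrder A] (w : List A) : List A :=
  (Multiset.sort
    (((List.range w.length).map (fun i => w.rotate i) : List (List A)) : Multiset (List A)) (· ≤ ·)).filterMap
    List.getLast?

/-- `w` is `π`-clustering: its BWT is `π(a₁)^{k₁} ⋯ π(a_k)^{k_k}` where `a₁ < … < a_k`
enumerates the alphabet and `k_i` is the number of occurrences of `π(a_i)` in `w`. -/
def Clustering {A : Type*} [LinearOrder A] [Fintype A] (π : Equiv.Perm A) (w : List A) : Prop :=
  bwt w =
    ((Finset.univ.sort (· ≤ ·)).map (fun a => List.replicate (w.count (π a)) (π a))).flatten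

/-- An interval exchange transformation on `[l, l + Σ len a)` over the ordered alphabet `A`,
with subinterval lengths `len` and permutation `perm`. -/
structure IET (A : Type*) [Fintype A] [LinearOrder A] where
  l : ℝ
  len : A → ℝ
  len_pos : ∀ a, 0 < len a
  perm : Equiv.Perm A

namespace IET

variable {A : Type*} [Fintype A] [LinearOrder A] (T : IET A)

/-- Right endpoint of the domain interval. -/
def right : ℝ := T.l + ∑ a, T.len a

/-- The domain `[ℓ, r)` of the IET. -/
def domain : Set ℝ := Set.Ico T.l T.right

/-- Left endpoint of the subinterval indexed by `a`. -/
def leftEnd (a : A) : ℝ := T.l + ∑ b ∈ Finset.univ.filter (· < a), T.len b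

/-- The subinterval `I_a`. -/
def seg (a : A) : Set ℝ := Set.Ico (T.leftEnd a) (T.leftEnd a + T.len a)

/-- Translation amount on `I_a`. -/
def τ (a : A) : ℝ :=
  (∑ b ∈ Finset.univ.filter (fun b => T.perm.symm b < T.perm.symm a), T.len b)
    - (∑ b ∈ Finset.univ.filter (· < a), T.len b)

open scoped Classical in
/-- The interval exchange transformation as a map `ℝ → ℝ` (identity off the domain). -/
noncomputable def map (x : ℝ) : ℝ :=
  if h : ∃ a, x ∈ T.seg a then x + T.τ h.choose else x

/-- The inverse transformation. -/
noncomputable def inv : ℝ → ℝ := Function.invFun T.map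

open scoped Classical in
/-- The letter of the subinterval containing `x`. -/
noncomputable def idx [Nonempty A] (x : ℝ) : A :=
  if h : ∃ a, x ∈ T.seg a then h.choose else Classical.arbitrary A

/-- The trajectory (natural coding) `Ω_T(x)` of `x`. -/
noncomputable def traj [Nonempty A] (x : ℝ) (n : ℕ) : A := T.idx (T.map^[n] x)

/-- The language of the IET: all finite factors of all trajectories. -/
def lang [Nonempty A] : Set (List A) :=
  { v | ∃ x ∈ T.domain, ∃ i : ℕ, v = (List.range v.length).map (fun j => T.traj x (i + j)) }

/-- The cylinder `I_w` of a word `w`. -/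
def cyl (w : List A) : Set ℝ :=
  { x | ∀ i : Fin w.length, T.map^[(i : ℕ)] x ∈ T.seg (w.get i) }

/-- Formal discontinuities of `T`. -/
def D : Set ℝ := { y | (∃ a, y = T.leftEnd a) ∧ y ≠ T.l }

/-- Formal discontinuities of the inverse of `T`. -/
def Dinv : Set ℝ :=
  { y | (∃ a, y = T.l + ∑ b ∈ Finset.univ.filter (fun b => T.perm.symm b < T.perm.symm a), T.len b)
      ∧ y ≠ T.l }

/-- `T^i` for an integer `i`. -/
noncomputable def iterZ (i : ℤ) (z : ℝ) : ℝ :=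
  if 0 ≤ i then T.map^[i.toNat] z else T.inv^[(-i).toNat] z

/-- Forward return time `ρ⁺_{J,T}(z)` of `z` to the open interval `(u, v)`. -/
noncomputable def rhoPlus (u v z : ℝ) : ℕ := sInf {n : ℕ | 0 < n ∧ T.map^[n] z ∈ Set.Ioo u v}

/-- Backward return time `ρ⁻_{J,T}(z)` of `z` to the open interval `(u, v)`. -/
noncomputable def rhoMinus (u v z : ℝ) : ℕ := sInf {n : ℕ | T.inv^[n] z ∈ Set.Ioo u v}

/-- The set `N_{J,T}(z)` for `J = [u, v)`. -/
noncomputable def Nset (u v z : ℝ) : Set ℝ :=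
  { y | ∃ i : ℤ, -(T.rhoMinus u v z : ℤ) ≤ i ∧ i ≤ (T.rhoPlus u v z : ℤ) - 1 ∧ y = T.iterZ i z }

/-- The set `Div(J, T)` for `J = [u, v)`. -/
noncomputable def Div (u v : ℝ) : Set ℝ := ⋃ γ ∈ T.D, T.Nset u v γ

/-- The interval `[u, v)` is admissible for `T`. -/
noncomputable def Admissible (u v : ℝ) : Prop :=
  u ∈ T.Div u v ∪ {T.right} ∧ v ∈ T.Div u v ∪ {T.right}

/-- Keane's regularity condition: the forward orbits of the formal discontinuities are
infinite and pairwise disjoint. -/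
def Regular : Prop :=
  ∀ γ ∈ T.D, ∀ γ' ∈ T.D, ∀ m n : ℕ, T.map^[m] γ = T.map^[n] γ' → γ = γ' ∧ m = n

end IET

open scoped Classical in
/-- First return time of `x` to `J` under `f` (junk value `0` if it never returns). -/
noncomputable def returnTime (f : ℝ → ℝ) (J : Set ℝ) (x : ℝ) : ℕ :=
  if h : ∃ n, 0 < n ∧ f^[n] x ∈ J then Nat.find h else 0

/-- First return map of `f` to `J`. -/
noncomputable def firstReturn (f : ℝ → ℝ) (J : Set ℝ) (x : ℝ) : ℝ :=
  f^[returnTime f J x] x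

/-- A finite word is a prefix of an infinite word (a sequence). -/
def SeqPrefix {α : Type*} (l : List α) (f : ℕ → α) : Prop :=
  ∀ i : Fin l.length, l.get i = f i

/-- `w` is a (left) return word to `u` in the language `L`: `wu ∈ L`, `u` is a prefix and a
suffix of `wu`, and `u` occurs exactly twice as a factor of `wu`. -/
def IsReturnWord {A : Type*} [DecidableEq A] (L : Set (List A)) (u w : List A) : Prop :=
  (w ++ u) ∈ L ∧ u <+: (w ++ u) ∧ u <:+ (w ++ u) ∧
    ((List.range ((w ++ u).length + 1)).countP
      (fun i => decide (u <+: (w ++ u).drop i))) = 2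


/-!
Write `wu` as the coding of a point `z`. The rotation of `w` by `j` (`1 ≤ j ≤ |w|`) is read off
the orbit of `T^j z`: since `u` is a prefix of `wu` occurring in `wu` only at positions `0` and
`|w|`, two rotations cannot agree beyond the part of the orbits coded by `wu`, so rotations are
ordered lexicographically as the points `T^j z` are (codings of an IET are order preserving).
The last letter of that rotation is `w_{j-1}`, and `T^j z ∈ T(I_{w_{j-1}})`. The images `T(I_a)`
are laid out in the order of `π⁻¹ a`, so the BWT lists the letters of `w` in increasing
`π⁻¹`-order, which is exactly the `π`-clustering condition.
-/

namespace List

variable {α : Type*}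

theorem getLast?_rotate {l : List α} {j : ℕ} (h0 : 0 < j) (h : j ≤ l.length) :
    (l.rotate j).getLast? = some l[j - 1] := by
  rw [rotate_eq_drop_append_take h, getLast?_append, getLast?_take, if_neg h0.ne',
    getElem?_eq_getElem (by omega)]
  rfl

theorem map_rotate_succ_perm (l : List α) :
    (range l.length).map (fun k => l.rotate (k + 1)) ~ (range l.length).map l.rotate := by
  obtain h | ⟨m, hm⟩ : l.length = 0 ∨ ∃ m, l.length = m + 1 :=
    (Nat.eq_zero_or_eq_succ_pred _).imp_right fun h => ⟨_, h⟩
  · simp [h]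
  have hlast : (range l.length).map (fun k => l.rotate (k + 1)) =
      (range m).map (fun k => l.rotate (k + 1)) ++ [l] := by
    rw [hm, range_succ, map_append, map_singleton, ← hm, rotate_length]
  have hfirst : (range l.length).map l.rotate = l :: (range m).map (fun k => l.rotate (k + 1)) := by
    rw [hm, range_succ_eq_map, map_cons, map_map, rotate_zero]
    rfl
  rw [hlast, hfirst]
  exact perm_append_singleton _ _

theorem filterMap_getLast?_map_rotate_succ (l : List α) :
    ((range l.length).map (fun k => l.rotate (k + 1))).filterMap getLast? = l := by
  have hlast : (range l.length).map (fun k => (l.rotate (k + 1)).getLast?) = l.map some := by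
    refine ext_getElem (by simp) fun k hk _ => ?_
    simp only [getElem_map, getElem_range]
    rw [getLast?_rotate k.succ_pos (by simpa using hk)]
    rfl
  simpa [filterMap_map] using congrArg (filterMap id) hlast

theorem flatten_map_replicate_count_perm [DecidableEq α] {L w : List α} (hL : L.Nodup)
    (hw : ∀ a ∈ w, a ∈ L) : (L.map fun a => replicate (w.count a) a).flatten ~ w := by
  refine perm_iff_count.2 fun b => ?_
  rw [count_flatten, map_map, ← sum_toFinset _ hL]
  by_cases hb : b ∈ L
  · simp [count_replicate, hb]
  · simp [count_replicate, hb, count_eq_zero.2 (mt (hw b) hb)]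

end List

section BurrowsWheeler

variable {A : Type*} [LinearOrder A]

theorem bwt_eq_filterMap_sort_rotate_succ (w : List A) :
    bwt w = (Multiset.sort
      (((List.range w.length).map fun k => w.rotate (k + 1) : List (List A)) : Multiset (List A))
      (· ≤ ·)).filterMap List.getLast? := by
  rw [bwt, Multiset.coe_eq_coe.2 w.map_rotate_succ_perm]

theorem bwt_perm (w : List A) : (bwt w).Perm w := by
  rw [bwt_eq_filterMap_sort_rotate_succ]
  conv_rhs => rw [← w.filterMap_getLast?_map_rotate_succ]
  exact (Multiset.coe_eq_coe.1 (Multiset.sort_eq _ _)).filterMap _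

theorem bwt_pairwise {R : A → A → Prop} (hR : ∀ a, R a a) {w : List A}
    (h : ∀ k k' (hk : k < w.length) (hk' : k' < w.length),
      w.rotate (k + 1) < w.rotate (k' + 1) → R w[k] w[k']) :
    (bwt w).Pairwise R := by
  rw [bwt_eq_filterMap_sort_rotate_succ, List.pairwise_filterMap]
  refine (Multiset.pairwise_sort _ _).imp_of_mem fun {r r'} hr hr' hle b hb b' hb' => ?_
  simp only [Multiset.mem_sort, Multiset.mem_coe, List.mem_map, List.mem_range] at hr hr'
  obtain ⟨k, hk, rfl⟩ := hr
  obtain ⟨k', hk', rfl⟩ := hr'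
  rcases hle.lt_or_eq with hlt | heq
  · rw [List.getLast?_rotate k.succ_pos hk, Option.some.injEq] at hb
    rw [List.getLast?_rotate k'.succ_pos hk', Option.some.injEq] at hb'
    subst hb hb'
    exact h k k' hk hk' hlt
  · rw [heq, hb', Option.some.injEq] at hb
    exact hb ▸ hR b'

theorem clustering_of_pairwise_bwt [Fintype A] {π : Equiv.Perm A} {w : List A}
    (h : (bwt w).Pairwise fun a b => π.symm a ≤ π.symm b) : Clustering π w := by
  have hperm : ((Finset.univ.sort (· ≤ ·)).map
      fun a => List.replicate (w.count (π a)) (π a)).flatten.Perm w := by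
    have := List.flatten_map_replicate_count_perm (w := w)
      ((Finset.sort_nodup Finset.univ (· ≤ ·)).map π.injective)
      fun a _ => by simp [π.surjective a]
    rwa [List.map_map] at this
  have hsorted : (((Finset.univ.sort (· ≤ ·)).map
      fun a => List.replicate (w.count (π a)) (π a)).flatten).Pairwise
        fun a b => π.symm a ≤ π.symm b := by
    refine List.pairwise_flatten.2 ⟨?_, ?_⟩
    · simp [List.pairwise_replicate]
    · refine List.pairwise_map.2 ((Finset.pairwise_sort _ _).imp fun hab y hy z hz => ?_)
      rw [List.eq_of_mem_replicate hy, List.eq_of_mem_replicate hz]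
      simpa using hab
  exact ((bwt_perm w).trans hperm.symm).eq_of_pairwise
    (fun a b _ _ hab hba => π.symm.injective (le_antisymm hab hba)) h hsorted

end BurrowsWheeler

section ReturnWords

variable {α : Type*}

theorem apply_mod_eq_of_prefix_append {w u : List α} {c : ℕ → α}
    (hc : ∀ t (h : t < (w ++ u).length), (w ++ u)[t] = c t) (hpre : u <+: w ++ u) {s : ℕ}
    (hs : s < w.length + u.length) : c (s % w.length) = c s := by
  induction s using Nat.strong_induction_on with
  | _ s ih =>
  rcases lt_or_ge s w.length with hsw | hsw
  · rw [Nat.mod_eq_of_lt hsw]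
  obtain ⟨s, rfl⟩ : ∃ s', s = w.length + s' := ⟨s - w.length, by omega⟩
  have hsu : s < u.length := by omega
  have hperiod : c s = c (w.length + s) := by
    rw [← hc s (by simp; omega), ← hc _ (by simp; omega),
      List.getElem_append_right (Nat.le_add_right _ _), ← hpre.getElem] <;> simp [hsu]
  rcases Nat.eq_zero_or_pos w.length with h0 | hpos
  · simp [h0]
  rw [Nat.add_mod_left, ih s (by omega) (by omega), hperiod]

theorem lt_add_of_cyclic_agree {c : ℕ → α} {n U : ℕ} (hper : ∀ s < n + U, c (s % n) = c s)
    (hocc : ∀ p, 0 < p → p < n → ¬ ∀ s < U, c (p + s) = c s) {j j' i : ℕ} (hj : 0 < j)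
    (hjj' : j < j') (hj' : j' ≤ n) (hagree : ∀ t < i, c ((t + j) % n) = c ((t + j') % n)) :
    j' + i < n + U := by
  by_contra! hwindow
  -- the two rotations agree on a window long enough to exhibit a copy of `u` at `j + n - j'`
  refine hocc (j + n - j') (by omega) (by omega) fun s hs => ?_
  calc c (j + n - j' + s) = c ((n - j' + s + j) % n) := by
        rw [hper _ (by omega)]; congr 1; omega
    _ = c ((n - j' + s + j') % n) := hagree _ (by omega)
    _ = c s := by
        rw [show n - j' + s + j' = n + s by omega, Nat.add_mod_left, hper s (by omega)]

theorem exists_lt_of_rotate_lt [LinearOrder α] {w : List α} {c : ℕ → α} {U : ℕ}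
    (hw : ∀ t (h : t < w.length), w[t] = c t)
    (hper : ∀ s < w.length + U, c (s % w.length) = c s)
    (hocc : ∀ p, 0 < p → p < w.length → ¬ ∀ s < U, c (p + s) = c s) {j j' : ℕ}
    (hj : 0 < j) (hjw : j ≤ w.length) (hj' : 0 < j') (hj'w : j' ≤ w.length)
    (h : w.rotate j < w.rotate j') :
    ∃ m, (∀ t < m, c (j + t) = c (j' + t)) ∧ c (j + m) < c (j' + m) := by
  have hrot : ∀ k t (ht : t < (w.rotate k).length), (w.rotate k)[t] = c ((t + k) % w.length) :=
    fun k t ht => by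
      rw [List.getElem_rotate]
      exact hw _ _
  obtain ⟨-, hlen⟩ | ⟨i, hi, _, hagree, hlt⟩ := List.lt_iff_exists.1 h
  · simp at hlen
  simp only [hrot] at hagree hlt
  have hjj' : j ≠ j' := by rintro rfl; exact lt_irrefl _ h
  have hwindow : j + i < w.length + U ∧ j' + i < w.length + U := by
    rw [List.length_rotate] at hi
    rcases lt_or_gt_of_ne hjj' with hlt' | hlt'
    · have := lt_add_of_cyclic_agree hper hocc hj hlt' hj'w hagree
      omega
    · have := lt_add_of_cyclic_agree hper hocc hj' hlt' hjw fun t ht => (hagree t ht).symm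
      omega
  refine ⟨i, fun t ht => ?_, ?_⟩
  · rw [add_comm j, add_comm j', ← hper _ (by omega), ← hper (t + j') (by omega)]
    exact hagree t ht
  · rwa [add_comm j, add_comm j', ← hper _ (by omega), ← hper (i + j') (by omega)]

namespace IsReturnWord

variable [DecidableEq α] {L : Set (List α)} {u w : List α}

theorem not_prefix_drop (h : IsReturnWord L u w) {p : ℕ} (hp : 0 < p) (hpw : p < w.length) :
    ¬ u <+: (w ++ u).drop p := by
  intro hocc
  obtain ⟨-, hpre, -, hcount⟩ := h
  have hcard : ((Finset.range ((w ++ u).length + 1)).filter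
      fun i => u <+: (w ++ u).drop i).card = 2 := by
    rw [← hcount, List.countP_eq_length_filter]
    rfl
  have hsub : ({0, p, w.length} : Finset ℕ) ⊆ (Finset.range ((w ++ u).length + 1)).filter
      fun i => u <+: (w ++ u).drop i := by
    intro i hi
    simp only [Finset.mem_insert, Finset.mem_singleton] at hi
    rcases hi with rfl | rfl | rfl <;> simp only [Finset.mem_filter, Finset.mem_range]
    · exact ⟨by omega, hpre⟩
    · exact ⟨by simp; omega, hocc⟩
    · exact ⟨by simp, by simp⟩
  have := Finset.card_le_card hsub
  rw [hcard, Finset.card_insert_of_notMem (by simp; omega),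
    Finset.card_insert_of_notMem (by simp; omega), Finset.card_singleton] at this
  omega

theorem not_forall_apply_add_eq (h : IsReturnWord L u w) {c : ℕ → α}
    (hc : ∀ t (ht : t < (w ++ u).length), (w ++ u)[t] = c t) {p : ℕ} (hp : 0 < p)
    (hpw : p < w.length) : ¬ ∀ s < u.length, c (p + s) = c s := by
  intro hall
  refine h.not_prefix_drop hp hpw (List.prefix_iff_getElem.2 ⟨by simp; omega, fun s hs => ?_⟩)
  rw [h.2.1.getElem hs, hc, List.getElem_drop, hc, hall s hs]

end IsReturnWord

end ReturnWords

theorem Finset.sum_filter_lt_add_le_sum {ι κ M : Type*} [Fintype ι] [LinearOrder κ]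
    [AddCommMonoid M] [PartialOrder M] [IsOrderedAddMonoid M] {f : ι → M} (hf : ∀ i, 0 ≤ f i)
    (key : ι → κ) {a : ι} {s : Finset ι} (ha : a ∈ s)
    (hs : ∀ c, key c < key a → c ∈ s) :
    ∑ c ∈ univ.filter (fun c => key c < key a), f c + f a ≤ ∑ c ∈ s, f c := by
  classical
  rw [add_comm, ← Finset.sum_insert (by simp)]
  exact Finset.sum_le_sum_of_subset_of_nonneg
    (Finset.insert_subset ha fun c hc => hs c (by simpa using hc)) fun i _ _ => hf i

namespace IET

variable {A : Type*} [Fintype A] [LinearOrder A] (T : IET A)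

def imgLeftEnd (a : A) : ℝ :=
  T.l + ∑ b ∈ Finset.univ.filter (fun b => T.perm.symm b < T.perm.symm a), T.len b

theorem leftEnd_add_len_le {a b : A} (h : a < b) : T.leftEnd a + T.len a ≤ T.leftEnd b := by
  have := Finset.sum_filter_lt_add_le_sum (fun c => (T.len_pos c).le) id (a := a)
    (s := Finset.univ.filter (· < b)) (by simpa using h) fun c hc => by simpa using hc.trans h
  simp only [id] at this
  rw [leftEnd, leftEnd]
  linarith

theorem imgLeftEnd_add_len_le {a b : A} (h : T.perm.symm a < T.perm.symm b) :
    T.imgLeftEnd a + T.len a ≤ T.imgLeftEnd b := by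
  have := Finset.sum_filter_lt_add_le_sum (fun c => (T.len_pos c).le) T.perm.symm (a := a)
    (s := Finset.univ.filter fun c => T.perm.symm c < T.perm.symm b) (by simpa using h)
    fun c hc => by simpa using hc.trans h
  rw [imgLeftEnd, imgLeftEnd]
  linarith

theorem imgLeftEnd_add_len_le_right (a : A) : T.imgLeftEnd a + T.len a ≤ T.right := by
  have := Finset.sum_filter_lt_add_le_sum (fun c => (T.len_pos c).le) T.perm.symm (a := a)
    (s := Finset.univ) (Finset.mem_univ a) fun c _ => Finset.mem_univ c
  rw [imgLeftEnd, right]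
  linarith

theorem l_le_imgLeftEnd (a : A) : T.l ≤ T.imgLeftEnd a :=
  le_add_of_nonneg_right (Finset.sum_nonneg fun c _ => (T.len_pos c).le)

theorem leftEnd_add_len (a : A) :
    T.leftEnd a + T.len a = T.l + ∑ c ∈ Finset.univ.filter fun c => c ≤ a, T.len c := by
  have : Finset.univ.filter fun c => c ≤ a = insert a (Finset.univ.filter (· < a)) := by
    ext c
    simp [le_iff_lt_or_eq, or_comm]
  rw [this, Finset.sum_insert (by simp), leftEnd]
  ring

theorem lt_of_mem_seg {a b : A} (h : a < b) {x y : ℝ} (hx : x ∈ T.seg a) (hy : y ∈ T.seg b) :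
    x < y :=
  hx.2.trans_le ((T.leftEnd_add_len_le h).trans hy.1)

theorem eq_of_mem_seg {a b : A} {x : ℝ} (ha : x ∈ T.seg a) (hb : x ∈ T.seg b) : a = b := by
  by_contra hab
  rcases lt_or_gt_of_ne hab with h | h
  · exact (T.lt_of_mem_seg h ha hb).false
  · exact (T.lt_of_mem_seg h hb ha).false

theorem exists_mem_seg [Nonempty A] {x : ℝ} (hx : x ∈ T.domain) : ∃ a, x ∈ T.seg a := by
  classical
  set S := Finset.univ.filter fun a => x < T.leftEnd a + T.len a
  have hS : S.Nonempty := by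
    set m : A := Finset.univ.max' Finset.univ_nonempty
    refine ⟨m, Finset.mem_filter.2 ⟨Finset.mem_univ _, ?_⟩⟩
    have : Finset.univ.filter (fun c => c ≤ m) = Finset.univ :=
      Finset.filter_true_of_mem fun c _ => Finset.le_max' _ c (Finset.mem_univ c)
    rw [leftEnd_add_len, this]
    exact hx.2
  set a := S.min' hS
  refine ⟨a, ?_, (Finset.mem_filter.1 (S.min'_mem hS)).2⟩
  by_cases hbelow : (Finset.univ.filter (· < a)).Nonempty
  · set b := (Finset.univ.filter (· < a)).max' hbelow
    have hba : b < a := (Finset.mem_filter.1 ((Finset.univ.filter (· < a)).max'_mem hbelow)).2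
    have hfilter : Finset.univ.filter (· < a) = Finset.univ.filter fun c => c ≤ b := by
      ext c
      simp only [Finset.mem_filter, Finset.mem_univ, true_and]
      exact ⟨fun hc => Finset.le_max' _ c (by simpa using hc), fun hc => hc.trans_lt hba⟩
    have hbS : b ∉ S := fun hb => (S.min'_le b hb).not_gt hba
    simp only [S, Finset.mem_filter, Finset.mem_univ, true_and, not_lt] at hbS
    rwa [leftEnd_add_len, ← hfilter] at hbS
  · rw [Finset.not_nonempty_iff_eq_empty] at hbelow
    rw [leftEnd, hbelow, Finset.sum_empty, add_zero]
    exact hx.1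

theorem map_eq {x : ℝ} {a : A} (hx : x ∈ T.seg a) : T.map x = x + T.τ a := by
  classical
  have h : ∃ b, x ∈ T.seg b := ⟨a, hx⟩
  rw [map, dif_pos h, T.eq_of_mem_seg h.choose_spec hx]

theorem map_mem_Ico {x : ℝ} {a : A} (hx : x ∈ T.seg a) :
    T.map x ∈ Set.Ico (T.imgLeftEnd a) (T.imgLeftEnd a + T.len a) := by
  have hτ : T.leftEnd a + T.τ a = T.imgLeftEnd a := by
    rw [leftEnd, τ, imgLeftEnd]
    ring
  rw [T.map_eq hx, ← hτ]
  exact ⟨by linarith [hx.1], by linarith [hx.2]⟩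

section Coding

variable [Nonempty A]

theorem idx_eq {x : ℝ} {a : A} (hx : x ∈ T.seg a) : T.idx x = a := by
  classical
  have h : ∃ b, x ∈ T.seg b := ⟨a, hx⟩
  rw [idx, dif_pos h]
  exact T.eq_of_mem_seg h.choose_spec hx

theorem mem_seg_idx {x : ℝ} (hx : x ∈ T.domain) : x ∈ T.seg (T.idx x) := by
  obtain ⟨a, ha⟩ := T.exists_mem_seg hx
  rwa [T.idx_eq ha]

theorem map_mem_domain {x : ℝ} (hx : x ∈ T.domain) : T.map x ∈ T.domain := by
  have h := T.map_mem_Ico (T.mem_seg_idx hx)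
  exact ⟨(T.l_le_imgLeftEnd _).trans h.1, h.2.trans_le (T.imgLeftEnd_add_len_le_right _)⟩

theorem iterate_mem_domain {x : ℝ} (hx : x ∈ T.domain) (k : ℕ) :
    T.map^[k] x ∈ T.domain := by
  induction k with
  | zero => exact hx
  | succ k ih => exact Function.iterate_succ_apply' T.map k x ▸ T.map_mem_domain ih

theorem map_lt_map_of_perm_symm_lt {x y : ℝ} (hx : x ∈ T.domain) (hy : y ∈ T.domain)
    (h : T.perm.symm (T.idx x) < T.perm.symm (T.idx y)) : T.map x < T.map y :=
  (T.map_mem_Ico (T.mem_seg_idx hx)).2.trans_le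
    ((T.imgLeftEnd_add_len_le h).trans (T.map_mem_Ico (T.mem_seg_idx hy)).1)

theorem perm_symm_traj_le_of_iterate_lt {z : ℝ} (hz : z ∈ T.domain) {k k' : ℕ}
    (h : T.map^[k + 1] z < T.map^[k' + 1] z) :
    T.perm.symm (T.traj z k) ≤ T.perm.symm (T.traj z k') := by
  by_contra! hgt
  have := T.map_lt_map_of_perm_symm_lt (T.iterate_mem_domain hz k') (T.iterate_mem_domain hz k) hgt
  rw [← Function.iterate_succ_apply' T.map, ← Function.iterate_succ_apply' T.map] at this
  exact lt_asymm h this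

theorem traj_iterate (x : ℝ) (k t : ℕ) : T.traj (T.map^[k] x) t = T.traj x (k + t) := by
  rw [traj, traj, ← Function.iterate_add_apply, add_comm]

theorem exists_getElem_eq_traj_of_mem_lang {v : List A} (hv : v ∈ T.lang) :
    ∃ z ∈ T.domain, ∀ t (ht : t < v.length), v[t] = T.traj z t := by
  obtain ⟨x, hx, i, hv⟩ := hv
  refine ⟨T.map^[i] x, T.iterate_mem_domain hx i, fun t ht => ?_⟩
  rw [T.traj_iterate, List.getElem_of_eq hv, List.getElem_map, List.getElem_range]

theorem iterate_sub_iterate_of_traj_eq {x y : ℝ} (hx : x ∈ T.domain) (hy : y ∈ T.domain)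
    {m : ℕ} (h : ∀ t < m, T.traj x t = T.traj y t) : T.map^[m] y - T.map^[m] x = y - x := by
  induction m with
  | zero => rfl
  | succ m ih =>
    have hm := h m m.lt_succ_self
    rw [traj, traj] at hm
    rw [Function.iterate_succ_apply', Function.iterate_succ_apply',
      T.map_eq (T.mem_seg_idx (T.iterate_mem_domain hx m)),
      T.map_eq (T.mem_seg_idx (T.iterate_mem_domain hy m)), hm,
      ← ih fun t ht => h t (ht.trans m.lt_succ_self)]
    ring

theorem lt_of_traj_lt {x y : ℝ} (hx : x ∈ T.domain) (hy : y ∈ T.domain) {m : ℕ}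
    (heq : ∀ t < m, T.traj x t = T.traj y t) (hlt : T.traj x m < T.traj y m) : x < y := by
  have := T.lt_of_mem_seg hlt (T.mem_seg_idx (T.iterate_mem_domain hx m))
    (T.mem_seg_idx (T.iterate_mem_domain hy m))
  linarith [T.iterate_sub_iterate_of_traj_eq hx hy heq]

end Coding

end IET

/-- In the language of an arbitrary IET with permutation `π` (no regularity or minimality
assumption), every return word is `π`-clustering. -/
theorem returnWord_clustering {A : Type*} [Fintype A] [LinearOrder A] [Nonempty A]
    (T : IET A) :
    ∀ u ∈ T.lang, ∀ w : List A, IsReturnWord T.lang u w → Clustering T.perm w := by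
  intro u _ w hret
  obtain ⟨z, hz, hc⟩ := T.exists_getElem_eq_traj_of_mem_lang hret.1
  have hw : ∀ t (ht : t < w.length), w[t] = T.traj z t := fun t ht => by
    rw [← hc t (by simp; omega), List.getElem_append_left]
  refine clustering_of_pairwise_bwt
    (bwt_pairwise (R := fun a b => T.perm.symm a ≤ T.perm.symm b) (fun _ => le_rfl)
      fun k k' hk hk' hrot => ?_)
  obtain ⟨m, hagree, hlt⟩ := exists_lt_of_rotate_lt hw
    (fun _ => apply_mod_eq_of_prefix_append hc hret.2.1)
    (fun _ hp hpw => hret.not_forall_apply_add_eq hc hp hpw) k.succ_pos hk k'.succ_pos hk' hrot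
  have horbit := T.lt_of_traj_lt (T.iterate_mem_domain hz (k + 1))
    (T.iterate_mem_domain hz (k' + 1)) (m := m)
    (by simpa only [T.traj_iterate] using hagree) (by simpa only [T.traj_iterate] using hlt)
  rw [hw, hw]
  exact T.perm_symm_traj_le_of_iterate_lt hz horbit
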